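/- arXiv:2407.02836 — 5 statements merged into one kernel-verified Lean document; each statement's English description precedes it below -/
import Mathlib

section
/- Let (A, ≤, →, S) be an arrow algebra and j : A → A a nucleus. Then (A, ≤, →_j, S_j), where a →_j b := a → j b and S_j := { a ∈ A | j a ∈ S }, is again an arrow algebra. -/
universe u

structure ArrowAlgebra (A : Type u) [CompleteLattice A] where
  arr : A → A → A
  arr_mono : ∀ {a a' b b' : A}, a' ≤ a → b ≤ b' → arr a b ≤ arr a' b'
  S : Set A
  S_up : ∀ {a b : A}, a ∈ S → a ≤ b → b ∈ S
  S_mp : ∀ {a b : A}, arr a b ∈ S → a ∈ S → b ∈ S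
  k_mem : (⨅ a : A, ⨅ b : A, arr a (arr b a)) ∈ S
  s_mem : (⨅ a : A, ⨅ b : A, ⨅ c : A,
      arr (arr a (arr b c)) (arr (arr a b) (arr a c))) ∈ S
  a_mem : ∀ {ι : Type u},
    (⨅ p : A × (ι → A) × (ι → A),
      arr (⨅ i, arr p.1 (arr (p.2.1 i) (p.2.2 i)))
          (arr p.1 (⨅ i, arr (p.2.1 i) (p.2.2 i)))) ∈ S

/-- A nucleus on an arrow algebra. -/
def IsNucleus {A : Type u} [CompleteLattice A] (𝒜 : ArrowAlgebra A) (j : A → A) : Prop :=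
  Monotone j ∧
  (⨅ a : A, 𝒜.arr a (j a)) ∈ 𝒜.S ∧
  (⨅ a : A, ⨅ b : A, 𝒜.arr (𝒜.arr a (j b)) (𝒜.arr (j a) (j b))) ∈ 𝒜.S

section Aux

variable {A : Type u} [CompleteLattice A] (𝒜 : ArrowAlgebra A)

/-- Uniform membership: the infimum of a family lies in the separator. -/
def AAU {I : Type u} (f : I → A) : Prop := (⨅ x, f x) ∈ 𝒜.S

variable {𝒜}

lemma AAU_up {I : Type u} {f g : I → A} (h : AAU 𝒜 f) (hle : ∀ x, f x ≤ g x) :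
    AAU 𝒜 g :=
  𝒜.S_up h (le_iInf fun x => (iInf_le f x).trans (hle x))

lemma AAU_k {I : Type u} (a b : I → A) :
    AAU 𝒜 (fun x => 𝒜.arr (a x) (𝒜.arr (b x) (a x))) :=
  𝒜.S_up 𝒜.k_mem (le_iInf fun x =>
    (iInf_le _ (a x)).trans (iInf_le _ (b x)))

lemma AAU_s {I : Type u} (a b c : I → A) :
    AAU 𝒜 (fun x => 𝒜.arr (𝒜.arr (a x) (𝒜.arr (b x) (c x)))
      (𝒜.arr (𝒜.arr (a x) (b x)) (𝒜.arr (a x) (c x)))) :=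
  𝒜.S_up 𝒜.s_mem (le_iInf fun x =>
    ((iInf_le _ (a x)).trans (iInf_le _ (b x))).trans (iInf_le _ (c x)))

lemma AAU_a {I ι : Type u} (p : I → A) (q r : ι → I → A) :
    AAU 𝒜 (fun x => 𝒜.arr (⨅ i, 𝒜.arr (p x) (𝒜.arr (q i x) (r i x)))
      (𝒜.arr (p x) (⨅ i, 𝒜.arr (q i x) (r i x)))) :=
  𝒜.S_up (𝒜.a_mem (ι := ι))
    (le_iInf fun x => iInf_le _ (p x, fun i => q i x, fun i => r i x))

/-- Uniform modus ponens (conclusion must be implication-shaped). -/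
lemma AAU_mp {I : Type u} {P Q R : I → A}
    (h1 : AAU 𝒜 (fun x => 𝒜.arr (P x) (𝒜.arr (Q x) (R x)))) (h2 : AAU 𝒜 P) :
    AAU 𝒜 (fun x => 𝒜.arr (Q x) (R x)) := by
  have hc : (⨅ x, P x) ∈ 𝒜.S := h2
  have s1 : (⨅ x, 𝒜.arr (⨅ y, P y) (𝒜.arr (Q x) (R x))) ∈ 𝒜.S :=
    𝒜.S_up h1 (le_iInf fun x =>
      (iInf_le _ x).trans (𝒜.arr_mono (iInf_le _ x) le_rfl))
  have s2 : 𝒜.arr (⨅ x, 𝒜.arr (⨅ y, P y) (𝒜.arr (Q x) (R x)))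
      (𝒜.arr (⨅ y, P y) (⨅ x, 𝒜.arr (Q x) (R x))) ∈ 𝒜.S :=
    𝒜.S_up (𝒜.a_mem (ι := I)) (iInf_le _ (⨅ y, P y, Q, R))
  exact 𝒜.S_mp (𝒜.S_mp s2 s1) hc

/-- Uniform identity: ⊢ a → a. -/
lemma AAU_i {I : Type u} (a : I → A) :
    AAU 𝒜 (fun x => 𝒜.arr (a x) (a x)) := by
  have k1 : AAU 𝒜 (fun x => 𝒜.arr (a x) (𝒜.arr (a x) (a x))) := AAU_k a a
  have k2 : AAU 𝒜 (fun x => 𝒜.arr (a x) (𝒜.arr (𝒜.arr (a x) (a x)) (a x))) :=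
    AAU_k a (fun x => 𝒜.arr (a x) (a x))
  have s1 := AAU_s (𝒜 := 𝒜) a (fun x => 𝒜.arr (a x) (a x)) a
  exact AAU_mp (AAU_mp s1 k2) k1

lemma AAU_le {I : Type u} {a b : I → A} (h : ∀ x, a x ≤ b x) :
    AAU 𝒜 (fun x => 𝒜.arr (a x) (b x)) :=
  AAU_up (AAU_i a) (fun x => 𝒜.arr_mono le_rfl (h x))

/-- Uniform composition. -/
lemma AAU_comp {I : Type u} {a b c : I → A}
    (h1 : AAU 𝒜 (fun x => 𝒜.arr (b x) (c x)))
    (h2 : AAU 𝒜 (fun x => 𝒜.arr (a x) (b x))) :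
    AAU 𝒜 (fun x => 𝒜.arr (a x) (c x)) := by
  have s1 := AAU_s (𝒜 := 𝒜) a b c
  have k1 : AAU 𝒜 (fun x => 𝒜.arr (𝒜.arr (b x) (c x))
      (𝒜.arr (a x) (𝒜.arr (b x) (c x)))) :=
    AAU_k (fun x => 𝒜.arr (b x) (c x)) a
  have t : AAU 𝒜 (fun x => 𝒜.arr (a x) (𝒜.arr (b x) (c x))) := AAU_mp k1 h1
  exact AAU_mp (AAU_mp s1 t) h2

/-- Uniform B-in-the-middle: from ⊢ x → y infer ⊢ (a→x) → (a→y). -/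
lemma AAU_bmid {I : Type u} (a : I → A) {p q : I → A}
    (h : AAU 𝒜 (fun x => 𝒜.arr (p x) (q x))) :
    AAU 𝒜 (fun x => 𝒜.arr (𝒜.arr (a x) (p x)) (𝒜.arr (a x) (q x))) := by
  have s1 := AAU_s (𝒜 := 𝒜) a p q
  have k1 : AAU 𝒜 (fun x => 𝒜.arr (𝒜.arr (p x) (q x))
      (𝒜.arr (a x) (𝒜.arr (p x) (q x)))) :=
    AAU_k (fun x => 𝒜.arr (p x) (q x)) a
  exact AAU_mp s1 (AAU_mp k1 h)

/-- Uniform exchange rule. -/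
lemma AAU_c {I : Type u} {p q r : I → A}
    (h : AAU 𝒜 (fun x => 𝒜.arr (p x) (𝒜.arr (q x) (r x)))) :
    AAU 𝒜 (fun x => 𝒜.arr (q x) (𝒜.arr (p x) (r x))) := by
  have t1 : AAU 𝒜 (fun x => 𝒜.arr (𝒜.arr (p x) (q x)) (𝒜.arr (p x) (r x))) :=
    AAU_mp (AAU_s p q r) h
  have t2 : AAU 𝒜 (fun x => 𝒜.arr (q x) (𝒜.arr (p x) (q x))) := AAU_k q p
  exact AAU_comp t1 t2

section Nucleus

variable {j : A → A} (hj : IsNucleus 𝒜 j)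
include hj

lemma AAU_n1 {I : Type u} (a : I → A) :
    AAU 𝒜 (fun x => 𝒜.arr (a x) (j (a x))) :=
  𝒜.S_up hj.2.1 (le_iInf fun x => iInf_le _ (a x))

lemma AAU_n2 {I : Type u} (a b : I → A) :
    AAU 𝒜 (fun x => 𝒜.arr (𝒜.arr (a x) (j (b x)))
      (𝒜.arr (j (a x)) (j (b x)))) :=
  𝒜.S_up hj.2.2 (le_iInf fun x =>
    (iInf_le _ (a x)).trans (iInf_le _ (b x)))

lemma AAU_strip {I : Type u} {z u v : I → A}
    (h : AAU 𝒜 (fun x => 𝒜.arr (z x) (𝒜.arr (u x) (j (v x))))) :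
    AAU 𝒜 (fun x => 𝒜.arr (j (z x)) (𝒜.arr (u x) (j (v x)))) := by
  have hC : AAU 𝒜 (fun x => 𝒜.arr (u x) (𝒜.arr (z x) (j (v x)))) := AAU_c h
  have hn : AAU 𝒜 (fun x => 𝒜.arr (𝒜.arr (z x) (j (v x)))
      (𝒜.arr (j (z x)) (j (v x)))) := AAU_n2 hj z v
  have hb := AAU_bmid u hn
  have t : AAU 𝒜 (fun x => 𝒜.arr (u x) (𝒜.arr (j (z x)) (j (v x)))) :=
    AAU_mp hb hC
  exact AAU_c t

lemma AAU_jclosed {I : Type u} (z w : I → A) :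
    AAU 𝒜 (fun x => 𝒜.arr (j (𝒜.arr (z x) (j (w x))))
      (𝒜.arr (z x) (j (w x)))) :=
  AAU_strip hj (AAU_i (fun x => 𝒜.arr (z x) (j (w x))))

/-- Key lemma for K: ⊢ a → j(b → j a). -/
lemma AAU_keyk {I : Type u} (a b : I → A) :
    AAU 𝒜 (fun x => 𝒜.arr (a x) (j (𝒜.arr (b x) (j (a x))))) := by
  have t1 : AAU 𝒜 (fun x => 𝒜.arr (𝒜.arr (b x) (a x))
      (𝒜.arr (b x) (j (a x)))) := AAU_bmid b (AAU_n1 hj a)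
  have t2 : AAU 𝒜 (fun x => 𝒜.arr (𝒜.arr (b x) (j (a x)))
      (j (𝒜.arr (b x) (j (a x))))) := AAU_n1 hj (fun x => 𝒜.arr (b x) (j (a x)))
  have t3 : AAU 𝒜 (fun x => 𝒜.arr (𝒜.arr (b x) (a x))
      (j (𝒜.arr (b x) (j (a x))))) := AAU_comp t2 t1
  have t4 := AAU_bmid a t3
  exact AAU_mp t4 (AAU_k a b)

/-- Key lemma for S. -/
lemma AAU_keys {I : Type u} (a b c : I → A) :
    AAU 𝒜 (fun x => 𝒜.arr (𝒜.arr (a x) (j (𝒜.arr (b x) (j (c x)))))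
      (j (𝒜.arr (𝒜.arr (a x) (j (b x))) (j (𝒜.arr (a x) (j (c x))))))) := by
  have h1 : AAU 𝒜 (fun x => 𝒜.arr (j (𝒜.arr (b x) (j (c x))))
      (𝒜.arr (j (b x)) (j (c x)))) := AAU_strip hj (AAU_n2 hj b c)
  -- h2 : (a → j(b→jc)) → (a → (jb → jc))
  have h2 := AAU_bmid a h1
  -- s-instance : (a → (jb → jc)) → ((a → jb) → (a → jc))
  have h3 := AAU_s (𝒜 := 𝒜) a (fun x => j (b x)) (fun x => j (c x))
  have h4 : AAU 𝒜 (fun x => 𝒜.arr (𝒜.arr (a x) (j (𝒜.arr (b x) (j (c x)))))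
      (𝒜.arr (𝒜.arr (a x) (j (b x))) (𝒜.arr (a x) (j (c x))))) := by
    exact AAU_comp h3 h2
  have h5 : AAU 𝒜 (fun x => 𝒜.arr (𝒜.arr (𝒜.arr (a x) (j (b x))) (𝒜.arr (a x) (j (c x))))
      (𝒜.arr (𝒜.arr (a x) (j (b x))) (j (𝒜.arr (a x) (j (c x)))))) :=
    AAU_bmid (fun x => 𝒜.arr (a x) (j (b x)))
      (AAU_n1 hj (fun x => 𝒜.arr (a x) (j (c x))))
  have h6 : AAU 𝒜 (fun x => 𝒜.arr
      (𝒜.arr (𝒜.arr (a x) (j (b x))) (j (𝒜.arr (a x) (j (c x)))))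
      (j (𝒜.arr (𝒜.arr (a x) (j (b x))) (j (𝒜.arr (a x) (j (c x))))))) :=
    AAU_n1 hj _
  exact AAU_comp h6 (AAU_comp h5 h4)

/-- Key lemma for the axiom (a). -/
lemma AAU_keya {I ι : Type u} (p : I → A) (q r : ι → I → A) :
    AAU 𝒜 (fun x => 𝒜.arr
      (⨅ i, 𝒜.arr (p x) (j (𝒜.arr (q i x) (j (r i x)))))
      (j (𝒜.arr (p x) (j (⨅ i, 𝒜.arr (q i x) (j (r i x))))))) := by
  set L : I → A := fun x => ⨅ i, 𝒜.arr (p x) (j (𝒜.arr (q i x) (j (r i x)))) with hL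
  set L2 : I → A := fun x => ⨅ i, 𝒜.arr (p x) (𝒜.arr (q i x) (j (r i x))) with hL2
  set M : I → A := fun x => ⨅ i, 𝒜.arr (q i x) (j (r i x)) with hM
  -- uniform over I × ι : (p → j(q i → j r i)) → (p → (q i → j r i))
  have hIc : AAU 𝒜 (fun y : I × ι => 𝒜.arr
      (𝒜.arr (p y.1) (j (𝒜.arr (q y.2 y.1) (j (r y.2 y.1)))))
      (𝒜.arr (p y.1) (𝒜.arr (q y.2 y.1) (j (r y.2 y.1))))) :=
    AAU_bmid (fun y : I × ι => p y.1)
      (AAU_jclosed hj (fun y : I × ι => q y.2 y.1) (fun y : I × ι => r y.2 y.1))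
  -- hence the uniform family over I of ι-infima is in S
  have H1 : (⨅ x, ⨅ i, 𝒜.arr (L x)
      (𝒜.arr (p x) (𝒜.arr (q i x) (j (r i x))))) ∈ 𝒜.S := by
    refine 𝒜.S_up hIc (le_iInf fun x => le_iInf fun i => ?_)
    refine (iInf_le _ (x, i)).trans (𝒜.arr_mono ?_ le_rfl)
    exact iInf_le _ i
  -- a-instance : (⨅ i, L → (p → (q i → j r i))) → (L → L2)
  have Ua1 := AAU_a (𝒜 := 𝒜) (I := I) (ι := ι) L
    (fun _ x => p x) (fun i x => 𝒜.arr (q i x) (j (r i x)))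
  have t1 : AAU 𝒜 (fun x => 𝒜.arr (L x) (L2 x)) := AAU_mp Ua1 H1
  -- a-instance : L2 → (p → M)
  have Ua2 : AAU 𝒜 (fun x => 𝒜.arr (L2 x) (𝒜.arr (p x) (M x))) :=
    AAU_a (I := I) (ι := ι) p q (fun i x => j (r i x))
  have t2 : AAU 𝒜 (fun x => 𝒜.arr (L x) (𝒜.arr (p x) (M x))) := AAU_comp Ua2 t1
  have t3 : AAU 𝒜 (fun x => 𝒜.arr (𝒜.arr (p x) (M x))
      (𝒜.arr (p x) (j (M x)))) := AAU_bmid p (AAU_n1 hj M)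
  have t4 : AAU 𝒜 (fun x => 𝒜.arr (L x) (𝒜.arr (p x) (j (M x)))) :=
    AAU_comp t3 t2
  have t5 : AAU 𝒜 (fun x => 𝒜.arr (𝒜.arr (p x) (j (M x)))
      (j (𝒜.arr (p x) (j (M x))))) := AAU_n1 hj _
  exact AAU_comp t5 t4

end Nucleus

/-- Pointwise version: membership in S from a constant uniform family. -/
lemma mem_of_AAU {a : A} (h : AAU 𝒜 (fun _ : PUnit.{u+1} => a)) : a ∈ 𝒜.S :=
  𝒜.S_up h (iInf_le _ PUnit.unit)

lemma AAU_of_mem {a : A} (h : a ∈ 𝒜.S) : AAU 𝒜 (fun _ : PUnit.{u+1} => a) :=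
  𝒜.S_up h (le_iInf fun _ => le_rfl)

end Aux

/-- Given a nucleus j, (A, ≤, →_j, S_j) is again an arrow algebra. -/
theorem nucleus_arrowAlgebra {A : Type u} [CompleteLattice A] (𝒜 : ArrowAlgebra A)
    (j : A → A) (hj : IsNucleus 𝒜 j) :
    ∃ 𝒜j : ArrowAlgebra A,
      𝒜j.arr = (fun a b => 𝒜.arr a (j b)) ∧ 𝒜j.S = { a : A | j a ∈ 𝒜.S } := by
  have hmono := hj.1
  have sjsub : ∀ {x : A}, x ∈ 𝒜.S → j x ∈ 𝒜.S := by
    intro x hx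
    have n1 : 𝒜.arr x (j x) ∈ 𝒜.S :=
      mem_of_AAU (AAU_n1 hj (fun _ : PUnit.{u+1} => x))
    exact 𝒜.S_mp n1 hx
  refine ⟨{
    arr := fun a b => 𝒜.arr a (j b)
    arr_mono := fun h1 h2 => 𝒜.arr_mono h1 (hmono h2)
    S := { a : A | j a ∈ 𝒜.S }
    S_up := fun ha hab => 𝒜.S_up ha (hmono hab)
    S_mp := ?_
    k_mem := ?_
    s_mem := ?_
    a_mem := ?_ }, rfl, rfl⟩
  · -- modus ponens for S_j
    intro a b h1 h2
    have n2 : AAU 𝒜 (fun _ : PUnit.{u+1} =>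
        𝒜.arr (𝒜.arr a (j b)) (𝒜.arr (j a) (j b))) :=
      AAU_n2 hj (fun _ => a) (fun _ => b)
    have t1 : AAU 𝒜 (fun _ : PUnit.{u+1} =>
        𝒜.arr (j a) (𝒜.arr (𝒜.arr a (j b)) (j b))) := AAU_c n2
    have t2 : AAU 𝒜 (fun _ : PUnit.{u+1} => 𝒜.arr (𝒜.arr a (j b)) (j b)) :=
      AAU_mp t1 (AAU_of_mem h2)
    have t3 : AAU 𝒜 (fun _ : PUnit.{u+1} =>
        𝒜.arr (𝒜.arr (𝒜.arr a (j b)) (j b))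
          (𝒜.arr (j (𝒜.arr a (j b))) (j b))) :=
      AAU_n2 hj (fun _ => 𝒜.arr a (j b)) (fun _ => b)
    have t4 := AAU_mp t3 t2
    exact 𝒜.S_mp (mem_of_AAU t4) h1
  · -- K
    show j (⨅ a : A, ⨅ b : A, 𝒜.arr a (j (𝒜.arr b (j a)))) ∈ 𝒜.S
    have hU : (⨅ x : A × A, 𝒜.arr x.1 (j (𝒜.arr x.2 (j x.1)))) ∈ 𝒜.S :=
      AAU_keyk hj (fun x : A × A => x.1) (fun x : A × A => x.2)
    exact sjsub (𝒜.S_up hU (le_iInf fun a => le_iInf fun b => iInf_le _ (a, b)))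
  · -- S
    show j (⨅ a : A, ⨅ b : A, ⨅ c : A,
        𝒜.arr (𝒜.arr a (j (𝒜.arr b (j c))))
          (j (𝒜.arr (𝒜.arr a (j b)) (j (𝒜.arr a (j c)))))) ∈ 𝒜.S
    have hU : (⨅ x : A × A × A,
        𝒜.arr (𝒜.arr x.1 (j (𝒜.arr x.2.1 (j x.2.2))))
          (j (𝒜.arr (𝒜.arr x.1 (j x.2.1)) (j (𝒜.arr x.1 (j x.2.2)))))) ∈ 𝒜.S :=
      AAU_keys hj (fun x : A × A × A => x.1) (fun x => x.2.1) (fun x => x.2.2)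
    exact sjsub (𝒜.S_up hU (le_iInf fun a => le_iInf fun b => le_iInf fun c =>
      iInf_le _ (a, b, c)))
  · -- A
    intro ι
    show j (⨅ p : A × (ι → A) × (ι → A),
        𝒜.arr (⨅ i, 𝒜.arr p.1 (j (𝒜.arr (p.2.1 i) (j (p.2.2 i)))))
          (j (𝒜.arr p.1 (j (⨅ i, 𝒜.arr (p.2.1 i) (j (p.2.2 i))))))) ∈ 𝒜.S
    have hU := AAU_keya hj (I := A × (ι → A) × (ι → A)) (ι := ι)
      (fun x => x.1) (fun i x => x.2.1 i) (fun i x => x.2.2 i)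
    exact sjsub hU
end

section
/- For any arrow algebra (A, ≤, →, S) and any fixed c ∈ A, the map j a := (a → c) → a is a nucleus on A. -/
universe u

namespace ArrowAlgebraAux

variable {A : Type u} [CompleteLattice A] (𝒜 : ArrowAlgebra A) {ι : Type u}

/-- Pointwise arrow of families. -/
def arrF (φ ψ : ι → A) : ι → A := fun i => 𝒜.arr (φ i) (ψ i)

/-- Uniform validity of a family. -/
def Valid (φ : ι → A) : Prop := (⨅ i, φ i) ∈ 𝒜.S

variable {𝒜}

local notation:60 φ " ⟹ " ψ => arrF 𝒜 φ ψ

theorem valid_K (φ ψ : ι → A) : Valid 𝒜 (φ ⟹ (ψ ⟹ φ)) := by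
  refine 𝒜.S_up 𝒜.k_mem (le_iInf fun i => ?_)
  exact le_trans (iInf_le _ (φ i)) (iInf_le _ (ψ i))

theorem valid_S (φ ψ χ : ι → A) :
    Valid 𝒜 ((φ ⟹ (ψ ⟹ χ)) ⟹ ((φ ⟹ ψ) ⟹ (φ ⟹ χ))) := by
  refine 𝒜.S_up 𝒜.s_mem (le_iInf fun i => ?_)
  exact le_trans (iInf_le _ (φ i)) (le_trans (iInf_le _ (ψ i)) (iInf_le _ (χ i)))

/-- Uniform modus ponens (conclusion an arrow family), via the `a_mem` axiom. -/
theorem valid_mp {φ ψ₁ ψ₂ : ι → A} (h1 : Valid 𝒜 (φ ⟹ (ψ₁ ⟹ ψ₂)))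
    (h2 : Valid 𝒜 φ) : Valid 𝒜 (ψ₁ ⟹ ψ₂) := by
  set T := ⨅ i, φ i with hTdef
  have h3 : (⨅ i, 𝒜.arr T (𝒜.arr (ψ₁ i) (ψ₂ i))) ∈ 𝒜.S := by
    refine 𝒜.S_up h1 (le_iInf fun i => ?_)
    exact le_trans (iInf_le _ i) (𝒜.arr_mono (iInf_le _ i) le_rfl)
  have ha : 𝒜.arr (⨅ i, 𝒜.arr T (𝒜.arr (ψ₁ i) (ψ₂ i)))
      (𝒜.arr T (⨅ i, 𝒜.arr (ψ₁ i) (ψ₂ i))) ∈ 𝒜.S :=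
    𝒜.S_up (𝒜.a_mem (ι := ι)) (iInf_le _ (⟨T, ψ₁, ψ₂⟩ : A × (ι → A) × (ι → A)))
  exact 𝒜.S_mp (𝒜.S_mp ha h3) h2

theorem wk1 {φ : ι → A} (γ : ι → A) (h : Valid 𝒜 φ) : Valid 𝒜 (γ ⟹ φ) :=
  valid_mp (valid_K φ γ) h

theorem valid_I (φ : ι → A) : Valid 𝒜 (φ ⟹ φ) :=
  valid_mp (valid_mp (valid_S φ (φ ⟹ φ) φ) (valid_K φ (φ ⟹ φ))) (valid_K φ φ)

theorem vMP1 {γ φ ψ : ι → A} (h1 : Valid 𝒜 (γ ⟹ (φ ⟹ ψ)))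
    (h2 : Valid 𝒜 (γ ⟹ φ)) : Valid 𝒜 (γ ⟹ ψ) :=
  valid_mp (valid_mp (valid_S γ φ ψ) h1) h2

theorem vMP2 {γ₁ γ₂ φ ψ : ι → A} (h1 : Valid 𝒜 (γ₁ ⟹ (γ₂ ⟹ (φ ⟹ ψ))))
    (h2 : Valid 𝒜 (γ₁ ⟹ (γ₂ ⟹ φ))) : Valid 𝒜 (γ₁ ⟹ (γ₂ ⟹ ψ)) :=
  vMP1 (vMP1 (wk1 γ₁ (valid_S γ₂ φ ψ)) h1) h2

theorem vMP3 {γ₁ γ₂ γ₃ φ ψ : ι → A}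
    (h1 : Valid 𝒜 (γ₁ ⟹ (γ₂ ⟹ (γ₃ ⟹ (φ ⟹ ψ)))))
    (h2 : Valid 𝒜 (γ₁ ⟹ (γ₂ ⟹ (γ₃ ⟹ φ)))) :
    Valid 𝒜 (γ₁ ⟹ (γ₂ ⟹ (γ₃ ⟹ ψ))) :=
  vMP2 (vMP2 (wk1 γ₁ (wk1 γ₂ (valid_S γ₃ φ ψ))) h1) h2

theorem vMP4 {γ₁ γ₂ γ₃ γ₄ φ ψ : ι → A}
    (h1 : Valid 𝒜 (γ₁ ⟹ (γ₂ ⟹ (γ₃ ⟹ (γ₄ ⟹ (φ ⟹ ψ))))))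
    (h2 : Valid 𝒜 (γ₁ ⟹ (γ₂ ⟹ (γ₃ ⟹ (γ₄ ⟹ φ))))) :
    Valid 𝒜 (γ₁ ⟹ (γ₂ ⟹ (γ₃ ⟹ (γ₄ ⟹ ψ)))) :=
  vMP3 (vMP3 (wk1 γ₁ (wk1 γ₂ (wk1 γ₃ (valid_S γ₄ φ ψ)))) h1) h2

/-- inner weakening at depth 1: δ ⊢ φ gives δ, γ ⊢ φ -/
theorem wkin1 {δ φ : ι → A} (γ : ι → A) (h : Valid 𝒜 (δ ⟹ φ)) :
    Valid 𝒜 (δ ⟹ (γ ⟹ φ)) :=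
  vMP1 (wk1 δ (valid_K φ γ)) h

theorem wkin2 {δ₁ δ₂ φ : ι → A} (γ : ι → A) (h : Valid 𝒜 (δ₁ ⟹ (δ₂ ⟹ φ))) :
    Valid 𝒜 (δ₁ ⟹ (δ₂ ⟹ (γ ⟹ φ))) :=
  vMP2 (wk1 δ₁ (wk1 δ₂ (valid_K φ γ))) h

theorem wkin3 {δ₁ δ₂ δ₃ φ : ι → A} (γ : ι → A)
    (h : Valid 𝒜 (δ₁ ⟹ (δ₂ ⟹ (δ₃ ⟹ φ)))) :
    Valid 𝒜 (δ₁ ⟹ (δ₂ ⟹ (δ₃ ⟹ (γ ⟹ φ)))) :=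
  vMP3 (wk1 δ₁ (wk1 δ₂ (wk1 δ₃ (valid_K φ γ)))) h

/-- The key uniform derivation: ⊢ (a → jb) → (ja → jb) for the Peirce map. -/
theorem peirce_main (c : A) :
    (⨅ a : A, ⨅ b : A, 𝒜.arr (𝒜.arr a (𝒜.arr (𝒜.arr b c) b))
      (𝒜.arr (𝒜.arr (𝒜.arr a c) a) (𝒜.arr (𝒜.arr b c) b))) ∈ 𝒜.S := by
  classical
  -- families over pairs (a, b)
  let Af : A × A → A := fun i => i.1
  let Bf : A × A → A := fun i => i.2
  let Cf : A × A → A := fun _ => c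
  let G : A × A → A := Bf ⟹ Cf          -- b → c
  let JB : A × A → A := G ⟹ Bf           -- (b→c) → b
  let X : A × A → A := (Af ⟹ Cf) ⟹ Af   -- (a→c) → a
  let F : A × A → A := Af ⟹ JB           -- a → jb
  -- depth-3 variables in context [F, X, G]
  have d3F : Valid 𝒜 (F ⟹ (X ⟹ (G ⟹ F))) := wkin2 G (wkin1 X (valid_I F))
  have d3X : Valid 𝒜 (F ⟹ (X ⟹ (G ⟹ X))) := wkin2 G (wk1 F (valid_I X))
  have d3G : Valid 𝒜 (F ⟹ (X ⟹ (G ⟹ G))) := wk1 F (wk1 X (valid_I G))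
  -- depth-4 variables in context [F, X, G, Af]  (y : a)
  have d4F : Valid 𝒜 (F ⟹ (X ⟹ (G ⟹ (Af ⟹ F)))) := wkin3 Af d3F
  have d4G : Valid 𝒜 (F ⟹ (X ⟹ (G ⟹ (Af ⟹ G)))) := wkin3 Af d3G
  have d4Y : Valid 𝒜 (F ⟹ (X ⟹ (G ⟹ (Af ⟹ Af)))) :=
    wk1 F (wk1 X (wk1 G (valid_I Af)))
  -- f y : JB = G ⟹ Bf
  have t_fy : Valid 𝒜 (F ⟹ (X ⟹ (G ⟹ (Af ⟹ (G ⟹ Bf))))) := vMP4 d4F d4Y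
  -- f y g : Bf
  have t_fyg : Valid 𝒜 (F ⟹ (X ⟹ (G ⟹ (Af ⟹ Bf)))) := vMP4 t_fy d4G
  -- g (f y g) : Cf  — so λy. g (f y g) : Af ⟹ Cf at depth 3
  have t_lam : Valid 𝒜 (F ⟹ (X ⟹ (G ⟹ (Af ⟹ Cf)))) := vMP4 d4G t_fyg
  -- x (λy …) : Af
  have u_a : Valid 𝒜 (F ⟹ (X ⟹ (G ⟹ Af))) := vMP3 d3X t_lam
  -- f (x …) : JB = G ⟹ Bf
  have u_jb : Valid 𝒜 (F ⟹ (X ⟹ (G ⟹ (G ⟹ Bf)))) := vMP3 d3F u_a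
  -- f (x …) g : Bf ; the whole statement is F ⟹ X ⟹ (G ⟹ Bf)
  have u_b : Valid 𝒜 (F ⟹ (X ⟹ (G ⟹ Bf))) := vMP3 u_jb d3G
  refine 𝒜.S_up u_b (le_iInf fun a => le_iInf fun b => ?_)
  exact iInf_le _ ((a, b) : A × A)

end ArrowAlgebraAux

open ArrowAlgebraAux in
/-- For any c, the map a ↦ (a → c) → a is a nucleus. -/
theorem isNucleus_peirce {A : Type u} [CompleteLattice A] (𝒜 : ArrowAlgebra A)
    (c : A) : IsNucleus 𝒜 (fun a => 𝒜.arr (𝒜.arr a c) a) := by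
  refine ⟨?_, ?_, ?_⟩
  · intro a b h
    exact 𝒜.arr_mono (𝒜.arr_mono h le_rfl) h
  · refine 𝒜.S_up 𝒜.k_mem (le_iInf fun a => ?_)
    exact le_trans (iInf_le _ a) (iInf_le _ (𝒜.arr a c))
  · exact peirce_main c
end

section
/- In an arrow algebra, the application ab := ⋀{ c → d | a ≤ b → c → d } satisfies: (1) it is monotone in both arguments; (2) (a → b → c)a ≤ b → c; (3) if a, b ∈ S then ab ∈ S. -/
universe u

/-- The application ab := ⋀{ c → d | a ≤ b → c → d }. -/
def ArrowAlgebra.app {A : Type u} [CompleteLattice A] (𝒜 : ArrowAlgebra A) (a b : A) : A :=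
  sInf { x : A | ∃ c d : A, x = 𝒜.arr c d ∧ a ≤ 𝒜.arr b (𝒜.arr c d) }

/-- Basic properties of the application. -/
theorem app_properties {A : Type u} [CompleteLattice A] (𝒜 : ArrowAlgebra A) :
    (∀ a a' b b' : A, a ≤ a' → b ≤ b' → 𝒜.app a b ≤ 𝒜.app a' b') ∧
    (∀ a b c : A, 𝒜.app (𝒜.arr a (𝒜.arr b c)) a ≤ 𝒜.arr b c) ∧
    (∀ a b : A, a ∈ 𝒜.S → b ∈ 𝒜.S → 𝒜.app a b ∈ 𝒜.S) := by

  refine ⟨?_, ?_, ?_⟩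
  · intro a a' b b' ha hb
    apply sInf_le_sInf
    rintro x ⟨c, d, rfl, h⟩
    exact ⟨c, d, rfl, le_trans ha (le_trans h (𝒜.arr_mono hb le_rfl))⟩
  · intro a b c
    exact sInf_le ⟨b, c, rfl, le_rfl⟩
  · intro a b ha hb
    set T := {x : A | ∃ c d : A, x = 𝒜.arr c d ∧ a ≤ 𝒜.arr b (𝒜.arr c d)} with hT
    let f : T → A := fun i => i.2.choose
    let g : T → A := fun i => i.2.choose_spec.choose
    have hfg : ∀ i : T, (i : A) = 𝒜.arr (f i) (g i) ∧ a ≤ 𝒜.arr b (𝒜.arr (f i) (g i)) :=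
      fun i => i.2.choose_spec.choose_spec
    have h1 : a ≤ ⨅ i : T, 𝒜.arr b (𝒜.arr (f i) (g i)) :=
      le_iInf fun i => (hfg i).2
    have h2 : (⨅ i : T, 𝒜.arr b (𝒜.arr (f i) (g i))) ∈ 𝒜.S := 𝒜.S_up ha h1
    have h3 : 𝒜.arr (⨅ i : T, 𝒜.arr b (𝒜.arr (f i) (g i)))
        (𝒜.arr b (⨅ i : T, 𝒜.arr (f i) (g i))) ∈ 𝒜.S :=
      𝒜.S_up (𝒜.a_mem (ι := T)) (iInf_le_of_le (b, f, g) le_rfl)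
    have h4 := 𝒜.S_mp (𝒜.S_mp h3 h2) hb
    have h5 : (⨅ i : T, 𝒜.arr (f i) (g i)) = sInf T := by
      rw [sInf_eq_iInf']
      exact iInf_congr fun i => ((hfg i).1).symm
    rw [ArrowAlgebra.app, ← hT, ← h5]
    exact h4
end

section
/- If a function f : A → B between arrow algebras is monotone with respect to the evidential orders and satisfies conditions (i) and (ii) of an implicative morphism, then it also satisfies condition (iii); hence it is an implicative morphism. -/
universe u

/-- An implicative morphism of arrow algebras. -/
def IsImplicativeMorphism {A B : Type u} [CompleteLattice A] [CompleteLattice B]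
    (𝒜 : ArrowAlgebra A) (ℬ : ArrowAlgebra B) (f : A → B) : Prop :=
  (∀ a ∈ 𝒜.S, f a ∈ ℬ.S) ∧
  (∃ r ∈ ℬ.S, ∀ a a' : A,
      r ≤ ℬ.arr (f (𝒜.arr a a')) (ℬ.arr (f a) (f a'))) ∧
  (∀ X : Set (A × A),
      (⨅ p ∈ X, 𝒜.arr p.1 p.2) ∈ 𝒜.S →
      (⨅ p ∈ X, ℬ.arr (f p.1) (f p.2)) ∈ ℬ.S)

/-
A set `X` of implications is realized in `A` by `u := ⨅ (a, a') ∈ X, a → a'`. Monotonicity and (ii)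
give a single `r ∈ S_B` with `r ≤ f u → f a → f a'` for every `(a, a') ∈ X`, so the uniform
distribution axiom `a_mem` of `B` turns `r` and `f u ∈ S_B` into `⋀ (a, a') ∈ X, f a → f a' ∈ S_B`.
-/

namespace ArrowAlgebra

variable {A : Type u} [CompleteLattice A] (𝒜 : ArrowAlgebra A)

theorem arr_iInf_mem {ι : Type u} {a : A} {b c : ι → A}
    (h : (⨅ i, 𝒜.arr a (𝒜.arr (b i) (c i))) ∈ 𝒜.S) :
    𝒜.arr a (⨅ i, 𝒜.arr (b i) (c i)) ∈ 𝒜.S :=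
  𝒜.S_mp (𝒜.S_up 𝒜.a_mem (iInf_le _ (⟨a, b, c⟩ : A × (ι → A) × (ι → A)))) h

theorem iInf_arr_mem_of_le {ι : Type u} {a r : A} {b c : ι → A}
    (ha : a ∈ 𝒜.S) (hr : r ∈ 𝒜.S) (hle : ∀ i, r ≤ 𝒜.arr a (𝒜.arr (b i) (c i))) :
    (⨅ i, 𝒜.arr (b i) (c i)) ∈ 𝒜.S :=
  𝒜.S_mp (𝒜.arr_iInf_mem (𝒜.S_up hr (le_iInf hle))) ha

theorem biInf_arr_mem_of_le {ι : Type u} {X : Set ι} {a r : A} {b c : ι → A}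
    (ha : a ∈ 𝒜.S) (hr : r ∈ 𝒜.S) (hle : ∀ i ∈ X, r ≤ 𝒜.arr a (𝒜.arr (b i) (c i))) :
    (⨅ i ∈ X, 𝒜.arr (b i) (c i)) ∈ 𝒜.S := by
  rw [← iInf_subtype'']
  exact 𝒜.iInf_arr_mem_of_le ha hr fun i => hle i i.2

end ArrowAlgebra

theorem ArrowAlgebra.biInf_map_arr_mem {A B : Type u} [CompleteLattice A] [CompleteLattice B]
    {𝒜 : ArrowAlgebra A} {ℬ : ArrowAlgebra B} {f : A → B} (hmono : Monotone f)
    (h1 : ∀ a ∈ 𝒜.S, f a ∈ ℬ.S) {r : B} (hr : r ∈ ℬ.S)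
    (hrle : ∀ a a' : A, r ≤ ℬ.arr (f (𝒜.arr a a')) (ℬ.arr (f a) (f a')))
    {X : Set (A × A)} (hX : (⨅ p ∈ X, 𝒜.arr p.1 p.2) ∈ 𝒜.S) :
    (⨅ p ∈ X, ℬ.arr (f p.1) (f p.2)) ∈ ℬ.S :=
  ℬ.biInf_arr_mem_of_le (h1 _ hX) hr fun p hp =>
    (hrle p.1 p.2).trans (ℬ.arr_mono (hmono (iInf₂_le p hp)) le_rfl)

/-- A monotone function satisfying (i) and (ii) is an implicative morphism. -/
theorem monotone_implicativeMorphism {A B : Type u}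
    [CompleteLattice A] [CompleteLattice B]
    (𝒜 : ArrowAlgebra A) (ℬ : ArrowAlgebra B) (f : A → B)
    (hmono : Monotone f)
    (h1 : ∀ a ∈ 𝒜.S, f a ∈ ℬ.S)
    (h2 : ∃ r ∈ ℬ.S, ∀ a a' : A,
      r ≤ ℬ.arr (f (𝒜.arr a a')) (ℬ.arr (f a) (f a'))) :
    (∀ X : Set (A × A),
      (⨅ p ∈ X, 𝒜.arr p.1 p.2) ∈ 𝒜.S →
      (⨅ p ∈ X, ℬ.arr (f p.1) (f p.2)) ∈ ℬ.S) ∧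
    IsImplicativeMorphism 𝒜 ℬ f := by
  obtain ⟨r, hr, hrle⟩ := h2
  have hX : ∀ X : Set (A × A), (⨅ p ∈ X, 𝒜.arr p.1 p.2) ∈ 𝒜.S →
      (⨅ p ∈ X, ℬ.arr (f p.1) (f p.2)) ∈ ℬ.S :=
    fun _ => ArrowAlgebra.biInf_map_arr_mem hmono h1 hr hrle
  exact ⟨hX, h1, ⟨r, hr, hrle⟩, hX⟩
end

section
/- An implicative morphism f : O(Y) → O(X) between frames (seen as arrow algebras with separator {⊤}) is exactly a monotone function preserving finite meets; moreover f is computationally dense (admits a right adjoint implicative morphism) if and only if f is a frame homomorphism (preserves finite meets and arbitrary joins). -/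
universe u

/-- Computational density: f admits a right adjoint implicative morphism. -/
def IsCompDense {A B : Type u} [CompleteLattice A] [CompleteLattice B]
    (𝒜 : ArrowAlgebra A) (ℬ : ArrowAlgebra B) (f : A → B) : Prop :=
  IsImplicativeMorphism 𝒜 ℬ f ∧
  ∃ h : B → A, IsImplicativeMorphism ℬ 𝒜 h ∧
    (⨅ b : B, ℬ.arr (f (h b)) b) ∈ ℬ.S ∧
    (⨅ a : A, 𝒜.arr a (h (f a))) ∈ 𝒜.S

lemma aux_charac {Y X : Type u} [Order.Frame Y] [Order.Frame X]
    (𝒪Y : ArrowAlgebra Y) (𝒪X : ArrowAlgebra X)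
    (hYarr : 𝒪Y.arr = fun a b => a ⇨ b) (hYS : 𝒪Y.S = {⊤})
    (hXarr : 𝒪X.arr = fun a b => a ⇨ b) (hXS : 𝒪X.S = {⊤})
    (f : Y → X) :
    IsImplicativeMorphism 𝒪Y 𝒪X f ↔
      Monotone f ∧ f ⊤ = ⊤ ∧ ∀ a b : Y, f (a ⊓ b) = f a ⊓ f b := by
  simp only [IsImplicativeMorphism, hYarr, hYS, hXarr, hXS, Set.mem_singleton_iff]
  constructor
  · rintro ⟨h1, ⟨r, hr, hr2⟩, h3⟩
    subst hr
    have hmono : Monotone f := by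
      intro a b hab
      have := h3 {(a, b)} (by simp [himp_eq_top_iff, hab])
      simp only [Set.mem_singleton_iff, iInf_iInf_eq_left, iInf_iInf_eq_right,
        himp_eq_top_iff] at this
      exact this
    have hkey : ∀ a a' : Y, f (a ⇨ a') ⊓ f a ≤ f a' := by
      intro a a'
      have := hr2 a a'
      rw [top_le_iff, himp_eq_top_iff, le_himp_iff] at this
      exact this
    refine ⟨hmono, h1 ⊤ rfl, fun a b => le_antisymm ?_ ?_⟩
    · exact le_inf (hmono inf_le_left) (hmono inf_le_right)
    · calc f a ⊓ f b ≤ f (b ⇨ a ⊓ b) ⊓ f b :=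
            inf_le_inf_right _ (hmono (le_himp_iff.2 le_rfl))
        _ ≤ f (a ⊓ b) := hkey _ _
  · rintro ⟨hmono, htop, hmeet⟩
    refine ⟨fun a ha => by rw [ha, htop], ⟨⊤, rfl, fun a a' => ?_⟩, fun X hX => ?_⟩
    · rw [top_le_iff, himp_eq_top_iff, le_himp_iff, ← hmeet]
      exact hmono (by rw [inf_comm]; exact inf_himp_le)
    · rw [iInf_eq_top] at hX ⊢
      intro p
      rw [iInf_eq_top]
      intro hp
      have := (hX p)
      rw [iInf_eq_top] at this
      exact himp_eq_top_iff.2 (hmono (himp_eq_top_iff.1 (this hp)))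

/-- Implicative morphisms between frames are exactly the finite-meet-preserving
monotone functions, and the computationally dense ones are exactly
the frame homomorphisms. -/
theorem frame_implicativeMorphism_charac {Y X : Type u}
    [Order.Frame Y] [Order.Frame X]
    (𝒪Y : ArrowAlgebra Y) (𝒪X : ArrowAlgebra X)
    (hYarr : 𝒪Y.arr = fun a b => a ⇨ b) (hYS : 𝒪Y.S = {⊤})
    (hXarr : 𝒪X.arr = fun a b => a ⇨ b) (hXS : 𝒪X.S = {⊤})
    (f : Y → X) :
    (IsImplicativeMorphism 𝒪Y 𝒪X f ↔
      Monotone f ∧ f ⊤ = ⊤ ∧ ∀ a b : Y, f (a ⊓ b) = f a ⊓ f b) ∧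
    (IsCompDense 𝒪Y 𝒪X f ↔
      (f ⊤ = ⊤ ∧ (∀ a b : Y, f (a ⊓ b) = f a ⊓ f b) ∧
        ∀ s : Set Y, f (sSup s) = sSup (f '' s))) := by
  have hchar := aux_charac 𝒪Y 𝒪X hYarr hYS hXarr hXS f
  refine ⟨hchar, ?_, ?_⟩
  · rintro ⟨hf, h, hh, hd1, hd2⟩
    obtain ⟨hmono, htop, hmeet⟩ := hchar.1 hf
    obtain ⟨hhmono, -, -⟩ := (aux_charac 𝒪X 𝒪Y hXarr hXS hYarr hYS h).1 hh
    rw [hXarr, hXS, Set.mem_singleton_iff, iInf_eq_top] at hd1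
    rw [hYarr, hYS, Set.mem_singleton_iff, iInf_eq_top] at hd2
    replace hd1 : ∀ b, f (h b) ≤ b := fun b => himp_eq_top_iff.1 (hd1 b)
    replace hd2 : ∀ a, a ≤ h (f a) := fun a => himp_eq_top_iff.1 (hd2 a)
    refine ⟨htop, hmeet, fun s => le_antisymm ?_ ?_⟩
    · calc f (sSup s) ≤ f (h (sSup (f '' s))) := hmono (sSup_le fun a ha =>
          (hd2 a).trans (hhmono (le_sSup ⟨a, ha, rfl⟩)))
        _ ≤ sSup (f '' s) := hd1 _
    · exact sSup_le fun b ⟨a, ha, hb⟩ => hb ▸ hmono (le_sSup ha)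
  · rintro ⟨htop, hmeet, hsup⟩
    have hmono : Monotone f := fun a b hab => by
      calc f a = f (a ⊓ b) := by rw [inf_eq_left.2 hab]
        _ ≤ f b := hmeet a b ▸ inf_le_right
    set h : X → Y := fun b => sSup {a | f a ≤ b} with hdef
    have gc : ∀ a b, f a ≤ b ↔ a ≤ h b := by
      intro a b
      constructor
      · intro hab; exact le_sSup hab
      · intro hab
        calc f a ≤ f (h b) := hmono hab
          _ = sSup (f '' {a | f a ≤ b}) := hsup _
          _ ≤ b := sSup_le (by rintro _ ⟨x, hx, rfl⟩; exact hx)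
    have hfh : ∀ b, f (h b) ≤ b := fun b => (gc _ _).2 le_rfl
    have hhf : ∀ a, a ≤ h (f a) := fun a => (gc _ _).1 le_rfl
    have hhmono : Monotone h := fun b b' hb => (gc _ _).1 ((hfh b).trans hb)
    refine ⟨hchar.2 ⟨hmono, htop, hmeet⟩, h,
      (aux_charac 𝒪X 𝒪Y hXarr hXS hYarr hYS h).2 ⟨hhmono, ?_, ?_⟩, ?_, ?_⟩
    · exact top_le_iff.1 ((gc ⊤ ⊤).1 le_top)
    · intro a b
      refine le_antisymm (le_inf (hhmono inf_le_left) (hhmono inf_le_right)) ?_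
      refine (gc _ _).1 ?_
      rw [hmeet]
      exact le_inf (inf_le_left.trans (hfh a)) (inf_le_right.trans (hfh b))
    · rw [hXarr, hXS, Set.mem_singleton_iff, iInf_eq_top]
      exact fun b => himp_eq_top_iff.2 (hfh b)
    · rw [hYarr, hYS, Set.mem_singleton_iff, iInf_eq_top]
      exact fun a => himp_eq_top_iff.2 (hhf a)
end
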